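/- For every n ≡ 2 (mod 4) with n > 2, the balanced shuffle-cube BSQ_n contains a Hamiltonian cycle, i.e., a cycle passing through every vertex of BSQ_n exactly once. -/

import Mathlib

def bitOf {n : ℕ} (u : Fin n → Bool) (i : ℕ) : Bool :=
  if h : i < n then u ⟨i, h⟩ else false

def lowRel {n : ℕ} (u v : Fin n → Bool) : Prop :=
  ∃ i < 2, bitOf u i ≠ bitOf v i ∧ ∀ k, k ≠ i → bitOf u k = bitOf v k

def blockAgree {n : ℕ} (u v : Fin n → Bool) (j : ℕ) : Prop :=
  ∀ k, (k < 4*j - 2 ∨ 4*j + 1 < k) → bitOf u k = bitOf v k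

/-- The pair of bits `u_{i+1} u_i` read as an integer in `{0,1,2,3}` (an element of `ZMod 4`). -/
def pairVal {n : ℕ} (u : Fin n → Bool) (i : ℕ) : ZMod 4 :=
  ((2 * (bitOf u (i+1)).toNat + (bitOf u i).toNat : ℕ) : ZMod 4)

def bsqRel {n : ℕ} (u v : Fin n → Bool) : Prop :=
  lowRel u v ∨ ∃ j, 1 ≤ j ∧ j ≤ (n-2)/4 ∧ blockAgree u v j ∧
    (pairVal v (4*j) = pairVal u (4*j) + 1 ∨ pairVal v (4*j) = pairVal u (4*j) - 1) ∧
    (pairVal v (4*j-2) = pairVal u (4*j-2) + (if bitOf u (4*j) then -1 else 1) ∨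
      pairVal v (4*j-2) = pairVal u (4*j-2))

/-- The `n`-dimensional balanced shuffle-cube `BSQ_n`. -/
def BSQ (n : ℕ) : SimpleGraph (Fin n → Bool) := SimpleGraph.fromRel bsqRel

/-!
Splitting off the top four bits identifies `BSQ (n + 4)` with the box product of `BSQ n` and
the graph `blockGraph` on the top 4-bit block, whose edges are the adjacencies (ii) inside that
block. A Hamiltonian cycle `a, l, a` of `G` and one `b, m, b` of `H` give one of `G □ H`: run
through the rows `l × {y}`, `y ∈ b :: m`, alternately forwards and backwards, and return to
`(a, b)` along the column of `a`. Since `BSQ 2` is a 4-cycle and `blockGraph` has an explicit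
Hamiltonian cycle, induction on `n` gives the theorem.
-/

namespace List

variable {α β : Type*}

def snake : List α → List β → List (α × β)
  | _, [] => []
  | l, y :: ys => l.map (·, y) ++ snake l.reverse ys

@[simp] theorem snake_nil_right (l : List α) : snake l ([] : List β) = [] := rfl

theorem snake_cons (l : List α) (y : β) (ys : List β) :
    snake l (y :: ys) = l.map (·, y) ++ snake l.reverse ys := rfl

@[simp] theorem snake_nil_left (ys : List β) : snake ([] : List α) ys = [] := by
  induction ys with
  | nil => rfl
  | cons y ys ih => simpa [snake_cons] using ih

@[simp] theorem mem_snake {l : List α} {ys : List β} {x : α × β} :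
    x ∈ snake l ys ↔ x.1 ∈ l ∧ x.2 ∈ ys := by
  induction ys generalizing l with
  | nil => simp
  | cons y ys ih =>
    rw [snake_cons, mem_append, ih, mem_reverse, mem_map, mem_cons]
    constructor
    · rintro (⟨z, hz, rfl⟩ | ⟨hx, hy⟩)
      exacts [⟨hz, .inl rfl⟩, ⟨hx, .inr hy⟩]
    · rintro ⟨hx, rfl | hy⟩
      exacts [.inl ⟨x.1, hx, rfl⟩, .inr ⟨hx, hy⟩]

theorem length_snake (l : List α) (ys : List β) :
    (snake l ys).length = l.length * ys.length := by
  induction ys generalizing l with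
  | nil => simp
  | cons y ys ih => simp [snake_cons, ih, Nat.mul_succ, Nat.add_comm]

theorem Nodup.snake {l : List α} {ys : List β} (hl : l.Nodup) (hys : ys.Nodup) :
    (snake l ys).Nodup := by
  induction ys generalizing l with
  | nil => simp
  | cons y ys ih =>
    obtain ⟨hy, hys⟩ := nodup_cons.mp hys
    rw [snake_cons, nodup_append]
    refine ⟨hl.map (Prod.mk_left_injective y), ih (nodup_reverse.mpr hl) hys, ?_⟩
    rintro _ hx z hz rfl
    obtain ⟨x, -, rfl⟩ := mem_map.mp hx
    exact hy (mem_snake.mp hz).2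

end List

namespace SimpleGraph

variable {α β : Type*} {G : SimpleGraph α} {H : SimpleGraph β} {a : α} {l : List α}

structure IsHamiltonianList (G : SimpleGraph α) (a : α) (l : List α) : Prop where
  isChain : (a :: (l ++ [a])).IsChain G.Adj
  nodup : (a :: l).Nodup
  mem : ∀ v, v ∈ a :: l
  two_le_length : 2 ≤ l.length

theorem IsHamiltonianList.exists_isHamiltonianCycle [DecidableEq α]
    (h : G.IsHamiltonianList a l) : ∃ p : G.Walk a a, p.IsHamiltonianCycle := by
  let p : G.Walk a a := (Walk.ofSupport _ (List.cons_ne_nil _ _) h.isChain).copy rfl (by simp)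
  have hsupp : p.support = a :: (l ++ [a]) :=
    (Walk.support_copy _ _ _).trans (Walk.support_ofSupport _ _)
  have hp : ¬ p.Nil := by simp [Walk.nil_iff_support_eq, hsupp]
  have htail : p.tail.support = l ++ [a] := by rw [Walk.support_tail_of_not_nil _ hp, hsupp]; rfl
  have hpath : p.tail.IsPath :=
    .mk' (htail ▸ (List.perm_append_singleton a l).nodup_iff.mpr h.nodup)
  refine ⟨p, Walk.isCycle_iff_isPath_tail_and_le_length.mpr ⟨hpath, ?_⟩,
    hpath.isHamiltonian_of_mem fun v => ?_⟩
  · have := congrArg List.length hsupp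
    simp only [Walk.length_support, List.length_cons, List.length_append] at this
    have := h.two_le_length
    omega
  · rw [htail]
    exact (List.perm_append_singleton a l).mem_iff.mpr (h.mem v)

theorem IsHamiltonianList.map (e : G ≃g H) (h : G.IsHamiltonianList a l) :
    H.IsHamiltonianList (e a) (l.map e) where
  isChain := by
    simpa using (List.isChain_map e).mpr (h.isChain.imp fun _ _ => e.map_adj_iff.mpr)
  nodup := by simpa using h.nodup.map e.injective
  mem v := by simpa using List.mem_map_of_mem (f := e) (h.mem (e.symm v))
  two_le_length := by simpa using h.two_le_length

theorem isChain_adj_reverse : l.reverse.IsChain G.Adj ↔ l.IsChain G.Adj := by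
  simp only [List.isChain_reverse, G.adj_comm]

theorem isChain_boxProd_map_left (y : β) (h : l.IsChain G.Adj) :
    (l.map (·, y)).IsChain (G □ H).Adj :=
  (List.isChain_map _).mpr (h.imp fun _ _ h => boxProd_adj_left.mpr h)

theorem isChain_boxProd_map_right (x : α) {ys : List β} (h : ys.IsChain H.Adj) :
    (ys.map (x, ·)).IsChain (G □ H).Adj :=
  (List.isChain_map _).mpr (h.imp fun _ _ h => boxProd_adj_right.mpr h)

/-- Rows alternate direction, so consecutive rows meet in a common column, and the last row ends
at an end of `l`, which is adjacent to `a`. -/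
theorem isChain_snake_append {w : β} {ys : List β}
    (hl : (a :: (l ++ [a])).IsChain G.Adj) (hys : (ys ++ [w]).IsChain H.Adj) :
    (List.snake l (ys ++ [w]) ++ [(a, w)]).IsChain (G □ H).Adj := by
  induction ys generalizing l with
  | nil =>
    simpa [List.snake_cons] using isChain_boxProd_map_left (H := H) w hl.of_cons
  | cons y ys ih =>
    rcases l.eq_nil_or_concat' with rfl | ⟨l, c, rfl⟩
    · simp
    have hrev : (a :: ((l ++ [c]).reverse ++ [a])).IsChain G.Adj := by
      simpa using isChain_adj_reverse.mpr hl
    rw [List.cons_append, List.snake_cons, List.append_assoc]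
    refine List.IsChain.append ?_ (ih hrev hys.of_cons) ?_
    · exact isChain_boxProd_map_left y hl.of_cons.left_of_append
    · obtain ⟨y', ys', hy'⟩ : ∃ y' ys', ys ++ [w] = y' :: ys' :=
        List.exists_cons_of_ne_nil (by simp)
      rw [List.cons_append, hy', List.isChain_cons_cons] at hys
      simp [hy', List.snake_cons, boxProd_adj, hys.1]

theorem IsHamiltonianList.boxProd {b : β} {m : List β} (hG : G.IsHamiltonianList a l)
    (hH : H.IsHamiltonianList b m) :
    (G □ H).IsHamiltonianList (a, b) (List.snake l (b :: m) ++ m.reverse.map (a, ·)) where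
  isChain := by
    obtain ⟨x, l, rfl⟩ := List.exists_cons_of_ne_nil
      (List.ne_nil_of_length_pos (two_pos.trans_le hG.two_le_length))
    obtain ⟨m, c, rfl⟩ := (List.eq_nil_or_concat' m).resolve_left
      (List.ne_nil_of_length_pos (two_pos.trans_le hH.two_le_length))
    have hcycle : (b :: (m ++ [c])).IsChain H.Adj := hH.isChain.left_of_append
    have hcol : ((a, c) :: (m.reverse.map (a, ·) ++ [(a, b)])).IsChain (G □ H).Adj := by
      simpa using isChain_boxProd_map_right (G := G) a (isChain_adj_reverse.mpr hcycle)
    have hax : G.Adj a x := (List.isChain_cons_cons.mp hG.isChain).1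
    have hsnake := isChain_snake_append (ys := b :: m) hG.isChain hcycle
    rw [List.reverse_append, List.reverse_singleton, List.singleton_append, List.map_cons,
      List.append_assoc, List.cons_append, List.isChain_cons_split]
    refine ⟨List.isChain_cons.mpr ⟨?_, hsnake⟩, hcol⟩
    simp [List.snake_cons, boxProd_adj, hax]
  nodup := by
    have ha : a ∉ l := (List.nodup_cons.mp hG.nodup).1
    have hb : b ∉ m := (List.nodup_cons.mp hH.nodup).1
    rw [List.nodup_cons, List.nodup_append]
    refine ⟨by simp [ha, hb], (List.nodup_cons.mp hG.nodup).2.snake hH.nodup,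
      (List.nodup_reverse.mpr (List.nodup_cons.mp hH.nodup).2).map (Prod.mk_right_injective a),
      ?_⟩
    rintro p hp _ hq rfl
    obtain ⟨y, -, rfl⟩ := List.mem_map.mp hq
    exact ha (List.mem_snake.mp hp).1
  mem := by
    rintro ⟨x, y⟩
    rcases List.mem_cons.mp (hG.mem x) with rfl | hx
    · rcases List.mem_cons.mp (hH.mem y) with rfl | hy <;> simp [*]
    · simp [hx, hH.mem y]
  two_le_length := by
    have := hG.two_le_length
    simp only [List.length_append, List.length_snake, List.length_cons]
    nlinarith

end SimpleGraph

section Bits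

variable {n m : ℕ}

theorem bitOf_eq_false (u : Fin n → Bool) {k : ℕ} (hk : n ≤ k) : bitOf u k = false :=
  dif_neg (by omega)

theorem bitOf_append_of_lt (a : Fin n → Bool) (b : Fin m → Bool) {k : ℕ} (hk : k < n) :
    bitOf (Fin.append a b) k = bitOf a k := by
  simp only [bitOf, hk, dif_pos (show k < n + m by omega), dite_true]
  exact Fin.append_left a b ⟨k, hk⟩

theorem bitOf_append_add (a : Fin n → Bool) (b : Fin m → Bool) (t : ℕ) :
    bitOf (Fin.append a b) (n + t) = bitOf b t := by
  by_cases ht : t < m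
  · simp only [bitOf, ht, dif_pos (show n + t < n + m by omega), dite_true]
    exact Fin.append_right a b ⟨t, ht⟩
  · rw [bitOf_eq_false _ (by omega), bitOf_eq_false _ (by omega)]

theorem pairVal_append_of_lt (a : Fin n → Bool) (b : Fin m → Bool) {k : ℕ} (hk : k + 1 < n) :
    pairVal (Fin.append a b) k = pairVal a k := by
  rw [pairVal, pairVal, bitOf_append_of_lt a b hk, bitOf_append_of_lt a b (by omega)]

theorem pairVal_append_add (a : Fin n → Bool) (b : Fin m → Bool) (t : ℕ) :
    pairVal (Fin.append a b) (n + t) = pairVal b t := by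
  rw [pairVal, pairVal, Nat.add_assoc, bitOf_append_add, bitOf_append_add]

theorem eq_iff_forall_bitOf {u v : Fin n → Bool} : u = v ↔ ∀ k, bitOf u k = bitOf v k := by
  refine ⟨fun h _ => h ▸ rfl, fun h => funext fun i => ?_⟩
  simpa [bitOf] using h i

theorem forall_bitOf_append_iff {S : ℕ → Prop} {a a' : Fin n → Bool} {b b' : Fin m → Bool} :
    (∀ k, S k → bitOf (Fin.append a b) k = bitOf (Fin.append a' b') k) ↔
      (∀ k, S k → bitOf a k = bitOf a' k) ∧ (∀ t, S (n + t) → bitOf b t = bitOf b' t) := by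
  refine ⟨fun h => ⟨fun k hk => ?_, fun t ht => ?_⟩, fun ⟨ha, hb⟩ k hk => ?_⟩
  · by_cases hkn : k < n
    · simpa [bitOf_append_of_lt _ _ hkn] using h k hk
    · rw [bitOf_eq_false _ (by omega), bitOf_eq_false _ (by omega)]
  · simpa [bitOf_append_add] using h _ ht
  · by_cases hkn : k < n
    · simpa [bitOf_append_of_lt _ _ hkn] using ha k hk
    · obtain ⟨t, rfl⟩ := Nat.exists_eq_add_of_le (not_lt.mp hkn)
      simpa [bitOf_append_add] using hb t hk

end Bits

section Append

variable {n m : ℕ} {a a' : Fin n → Bool} {b b' : Fin m → Bool}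

/-- Adjacency (ii) inside the 4-bit block `u_{i+3} u_{i+2} u_{i+1} u_i`. -/
def blockStep (u v : Fin n → Bool) (i : ℕ) : Prop :=
  (pairVal v (i + 2) = pairVal u (i + 2) + 1 ∨ pairVal v (i + 2) = pairVal u (i + 2) - 1) ∧
    (pairVal v i = pairVal u i + (if bitOf u (i + 2) then -1 else 1) ∨ pairVal v i = pairVal u i)

instance (u v : Fin n → Bool) (i : ℕ) : Decidable (blockStep u v i) :=
  inferInstanceAs (Decidable (_ ∧ _))

theorem bsqRel_iff {u v : Fin n → Bool} : bsqRel u v ↔ lowRel u v ∨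
    ∃ j, 1 ≤ j ∧ j ≤ (n - 2) / 4 ∧ blockAgree u v j ∧ blockStep u v (4 * j - 2) := by
  refine or_congr_right (exists_congr fun j => ?_)
  rcases Nat.eq_zero_or_pos j with rfl | hj
  · simp
  · rw [blockStep, show 4 * j - 2 + 2 = 4 * j by omega]

theorem blockStep_append_of_lt {i : ℕ} (hi : i + 3 < n) :
    blockStep (Fin.append a b) (Fin.append a' b') i ↔ blockStep a a' i := by
  simp only [blockStep, pairVal_append_of_lt _ _ hi,
    pairVal_append_of_lt _ _ (show i + 1 < n by omega),
    bitOf_append_of_lt _ _ (show i + 2 < n by omega)]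

theorem blockStep_append_add (i : ℕ) :
    blockStep (Fin.append a b) (Fin.append a' b') (n + i) ↔ blockStep b b' i := by
  simp only [blockStep, Nat.add_assoc, pairVal_append_add, bitOf_append_add]

theorem lowRel_append (hn : 2 ≤ n) :
    lowRel (Fin.append a b) (Fin.append a' b') ↔ lowRel a a' ∧ b = b' := by
  simp only [lowRel, forall_bitOf_append_iff, eq_iff_forall_bitOf (u := b)]
  constructor
  · rintro ⟨i, hi, hne, ha, hb⟩
    rw [bitOf_append_of_lt _ _ (by omega), bitOf_append_of_lt _ _ (by omega)] at hne
    exact ⟨⟨i, hi, hne, ha⟩, fun t => hb t (by omega)⟩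
  · rintro ⟨⟨i, hi, hne, ha⟩, hb⟩
    refine ⟨i, hi, ?_, ha, fun t _ => hb t⟩
    rwa [bitOf_append_of_lt _ _ (by omega), bitOf_append_of_lt _ _ (by omega)]

theorem blockAgree_append_of_lt {j : ℕ} (hj : 4 * j + 1 < n) :
    blockAgree (Fin.append a b) (Fin.append a' b') j ↔ blockAgree a a' j ∧ b = b' := by
  simp only [blockAgree, forall_bitOf_append_iff, eq_iff_forall_bitOf (u := b)]
  exact and_congr_right fun _ => ⟨fun h t => h t (.inr (by omega)), fun h t _ => h t⟩

theorem blockAgree_append_top {j : ℕ} (hj : 4 * j = n + 2) (hm : m ≤ 4) :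
    blockAgree (Fin.append a b) (Fin.append a' b') j ↔ a = a' := by
  simp only [blockAgree, forall_bitOf_append_iff, eq_iff_forall_bitOf (u := a)]
  refine ⟨fun h k => ?_, fun h => ⟨fun k _ => h k, fun t ht => ?_⟩⟩
  · by_cases hk : k < n
    · exact h.1 k (.inl (by omega))
    · rw [bitOf_eq_false _ (by omega), bitOf_eq_false _ (by omega)]
  · rw [bitOf_eq_false _ (by omega), bitOf_eq_false _ (by omega)]

end Append

theorem bsqRel_append {n : ℕ} (hn : n % 4 = 2) {a a' : Fin n → Bool} {b b' : Fin 4 → Bool} :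
    bsqRel (Fin.append a b) (Fin.append a' b') ↔
      (bsqRel a a' ∧ b = b') ∨ (a = a' ∧ blockStep b b' 0) := by
  rw [bsqRel_iff, bsqRel_iff, lowRel_append (by omega)]
  constructor
  · rintro (⟨hlow, rfl⟩ | ⟨j, hj, hjn, hagree, hstep⟩)
    · exact .inl ⟨.inl hlow, rfl⟩
    rcases (show j ≤ (n - 2) / 4 ∨ 4 * j = n + 2 by omega) with hjn | htop
    · rw [blockAgree_append_of_lt (by omega)] at hagree
      rw [blockStep_append_of_lt (by omega)] at hstep
      exact .inl ⟨.inr ⟨j, hj, hjn, hagree.1, hstep⟩, hagree.2⟩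
    · rw [blockAgree_append_top htop le_rfl] at hagree
      rw [show 4 * j - 2 = n + 0 by omega, blockStep_append_add] at hstep
      exact .inr ⟨hagree, hstep⟩
  · rintro (⟨hlow | ⟨j, hj, hjn, hagree, hstep⟩, rfl⟩ | ⟨rfl, hstep⟩)
    · exact .inl ⟨hlow, rfl⟩
    · exact .inr ⟨j, hj, by omega, (blockAgree_append_of_lt (by omega)).mpr ⟨hagree, rfl⟩,
        (blockStep_append_of_lt (by omega)).mpr hstep⟩
    · refine .inr ⟨(n + 2) / 4, by omega, by omega,
        (blockAgree_append_top (by omega) le_rfl).mpr rfl, ?_⟩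
      rwa [show 4 * ((n + 2) / 4) - 2 = n + 0 by omega, blockStep_append_add]

open SimpleGraph

def blockGraph : SimpleGraph (Fin 4 → Bool) := fromRel (blockStep · · 0)

def bsqAppendIso {n : ℕ} (hn : n % 4 = 2) : (BSQ n).boxProd blockGraph ≃g BSQ (n + 4) where
  toEquiv := Fin.appendEquiv n 4
  map_rel_iff' {p q} := by
    obtain ⟨a, b⟩ := p
    obtain ⟨a', b'⟩ := q
    change (BSQ (n + 4)).Adj (Fin.append a b) (Fin.append a' b') ↔ _
    have hinj : Fin.append a b = Fin.append a' b' ↔ a = a' ∧ b = b' :=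
      ((Fin.appendEquiv n 4).injective.eq_iff (a := (a, b)) (b := (a', b'))).trans Prod.ext_iff
    simp only [BSQ, blockGraph, fromRel_adj, boxProd_adj, ne_eq, hinj, bsqRel_append hn]
    tauto

instance : DecidableRel blockGraph.Adj := fun u v =>
  inferInstanceAs (Decidable (u ≠ v ∧ (blockStep u v 0 ∨ blockStep v u 0)))

theorem isHamiltonianList_blockGraph : blockGraph.IsHamiltonianList ![false, false, false, false]
    [![false, false, true, false], ![true, true, false, false], ![true, true, true, false],
     ![false, true, false, false], ![false, true, true, false], ![true, false, false, false],
     ![true, false, true, false], ![false, false, false, true], ![false, false, true, true],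
     ![true, true, false, true], ![true, true, true, true], ![false, true, false, true],
     ![false, true, true, true], ![true, false, false, true], ![true, false, true, true]] where
  isChain := by decide
  nodup := by decide
  mem := by decide
  two_le_length := by decide

theorem bsqRel_two_iff {u v : Fin 2 → Bool} :
    bsqRel u v ↔ ∃ i < 2, bitOf u i ≠ bitOf v i ∧ bitOf u (1 - i) = bitOf v (1 - i) := by
  rw [bsqRel_iff, or_iff_left (by rintro ⟨j, hj, hj0, -⟩; omega), lowRel]
  refine exists_congr fun i => and_congr_right fun hi => and_congr_right fun _ =>
    ⟨fun h => h _ (by omega), fun h k hk => ?_⟩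
  by_cases hk2 : k < 2
  · obtain rfl : k = 1 - i := by omega
    exact h
  · rw [bitOf_eq_false _ (by omega), bitOf_eq_false _ (by omega)]

theorem isHamiltonianList_BSQ_two :
    (BSQ 2).IsHamiltonianList ![false, false] [![true, false], ![true, true], ![false, true]] where
  isChain := List.IsChain.imp
    (fun u v h => by rwa [BSQ, fromRel_adj, bsqRel_two_iff, bsqRel_two_iff]) (by decide)
  nodup := by decide
  mem := by decide
  two_le_length := by decide

theorem exists_isHamiltonianList_BSQ (k : ℕ) :
    ∃ a l, (BSQ (4 * k + 2)).IsHamiltonianList a l := by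
  induction k with
  | zero => exact ⟨_, _, isHamiltonianList_BSQ_two⟩
  | succ k ih =>
    obtain ⟨a, l, h⟩ := ih
    exact ⟨_, _, (h.boxProd isHamiltonianList_blockGraph).map (bsqAppendIso (by omega))⟩

theorem BSQ_hamiltonian_general (n : ℕ) (hn : n % 4 = 2) :
    ∃ (a : Fin n → Bool) (p : (BSQ n).Walk a a), p.IsHamiltonianCycle := by
  obtain ⟨k, rfl⟩ : ∃ k, n = 4 * k + 2 := ⟨n / 4, by omega⟩
  obtain ⟨a, l, h⟩ := exists_isHamiltonianList_BSQ k
  exact ⟨a, h.exists_isHamiltonianCycle⟩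

/-- For every `n ≡ 2 (mod 4)` with `n > 2`, the balanced shuffle-cube `BSQ_n`
contains a Hamiltonian cycle. -/
theorem BSQ_hamiltonian (n : ℕ) (hn : n % 4 = 2) (hn2 : 2 < n) :
    ∃ (a : Fin n → Bool) (p : (BSQ n).Walk a a), p.IsHamiltonianCycle :=
  BSQ_hamiltonian_general n hn
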